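/- arXiv:1812.08117 — 2 statements merged into one kernel-verified Lean document; each statement's English description precedes it below -/
import Mathlib

section
/- Let v⁻, v⁺, B ∈ ℝ³ and θ ∈ ℝ. If v⁺ − v⁻ = θ • ((v⁺ + v⁻) ×₃ B), then ‖v⁺‖ = ‖v⁻‖. -/
noncomputable section

/-- The three-dimensional cross product on `EuclideanSpace ℝ (Fin 3)`. -/
def cross3 (a b : EuclideanSpace ℝ (Fin 3)) : EuclideanSpace ℝ (Fin 3) :=
  WithLp.toLp 2 (crossProduct a b)

infixl:74 " ×₃ " => cross3

theorem inner_self_cross3 (a b : EuclideanSpace ℝ (Fin 3)) : inner ℝ a (a ×₃ b) = 0 := by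
  rw [cross3, EuclideanSpace.inner_eq_star_dotProduct, star_trivial, dotProduct_comm]
  exact dot_self_cross a.ofLp b.ofLp

/-- The rotation step of the Boris integrator,
`v⁺ − v⁻ = θ • ((v⁺ + v⁻) ×₃ B)` with `θ = αΔt/2`, preserves the Euclidean norm. -/
theorem boris_rotation_preserves_norm
    (vminus vplus B : EuclideanSpace ℝ (Fin 3)) (θ : ℝ)
    (h : vplus - vminus = θ • ((vplus + vminus) ×₃ B)) :
    ‖vplus‖ = ‖vminus‖ := by
  rw [← real_inner_add_sub_eq_zero_iff, h, real_inner_smul_right, inner_self_cross3, mul_zero]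

end
end

section
/- Let f : ℝ³ × ℝ³ → ℝ³, x₀, v₀ ∈ ℝ³ and Δτ > 0. Consider one SDC sweep with M = 2 Gauss–Lobatto nodes τ₁ = 0, τ₂ = Δτ, coefficient rows sq₂ = (0, Δτ²/4, Δτ²/4), s^χ₂ = (0, Δτ²/2, 0), s₂ = (0, Δτ/2, Δτ/2), starting from the constant initial iterate x₁⁰ = x₂⁰ = x₀, v₁⁰ = v₂⁰ = v₀ and with the first-node values of the new iterate fixed to x₁¹ = x₀, v₁¹ = v₀. Suppose x₂¹, v₂¹ ∈ ℝ³ satisfy the SDC update equations x₂¹ = x₁¹ + Δτ • v₀ + (Δτ²/4) • (f(x₁⁰,v₁⁰) + f(x₂⁰,v₂⁰)) + (Δτ²/2) • (f(x₁¹,v₁¹) − f(x₁⁰,v₁⁰)) and v₂¹ = v₁¹ + (Δτ/2) • (f(x₁⁰,v₁⁰) + f(x₂⁰,v₂⁰)) + (Δτ/2) • (f(x₂¹,v₂¹) − f(x₂⁰,v₂⁰)) + (Δτ/2) • (f(x₁¹,v₁¹) − f(x₁⁰,v₁⁰)). Then (x₂¹, v₂¹) satisfies the velocity Verlet scheme: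 x₂¹ = x₀ + Δτ • v₀ + (Δτ²/2) • f(x₀,v₀) and v₂¹ = v₀ + (Δτ/2) • (f(x₀,v₀) + f(x₂¹,v₂¹)). -/
noncomputable section

/-- A single SDC sweep with `M = 2` Gauss–Lobatto nodes, starting from the constant
initial iterate `x₁⁰ = x₂⁰ = x₀`, `v₁⁰ = v₂⁰ = v₀` and with the first-node values of the
new iterate fixed to the initial data, reduces exactly to the standard velocity Verlet
scheme. -/
theorem sdc_sweep_two_lobatto_nodes_is_velocity_verlet
    (f : EuclideanSpace ℝ (Fin 3) × EuclideanSpace ℝ (Fin 3) → EuclideanSpace ℝ (Fin 3))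
    (x₀ v₀ : EuclideanSpace ℝ (Fin 3)) (Δτ : ℝ) (hΔτ : 0 < Δτ)
    (x₁0 x₂0 v₁0 v₂0 x₁1 v₁1 x₂1 v₂1 : EuclideanSpace ℝ (Fin 3))
    (hx₁0 : x₁0 = x₀) (hx₂0 : x₂0 = x₀) (hv₁0 : v₁0 = v₀) (hv₂0 : v₂0 = v₀)
    (hx₁1 : x₁1 = x₀) (hv₁1 : v₁1 = v₀)
    (hxsweep : x₂1 = x₁1 + Δτ • v₀
        + (Δτ ^ 2 / 4) • (f (x₁0, v₁0) + f (x₂0, v₂0))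
        + (Δτ ^ 2 / 2) • (f (x₁1, v₁1) - f (x₁0, v₁0)))
    (hvsweep : v₂1 = v₁1 + (Δτ / 2) • (f (x₁0, v₁0) + f (x₂0, v₂0))
        + (Δτ / 2) • (f (x₂1, v₂1) - f (x₂0, v₂0))
        + (Δτ / 2) • (f (x₁1, v₁1) - f (x₁0, v₁0))) :
    x₂1 = x₀ + Δτ • v₀ + (Δτ ^ 2 / 2) • f (x₀, v₀) ∧
    v₂1 = v₀ + (Δτ / 2) • (f (x₀, v₀) + f (x₂1, v₂1)) := by
  subst hx₁0 hx₂0 hv₁0 hv₂0 hx₁1 hv₁1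
  constructor
  · rw [hxsweep]; module
  · conv_lhs => rw [hvsweep]
    module

end
end
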